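/- Let φ be a 3-CNF formula with m clauses over n Boolean variables, where under an assignment x ∈ {0,1}^n the k-th clause has literal values l_{k,1}(x), l_{k,2}(x), l_{k,3}(x) ∈ {0,1}, and let Q(φ)(x, a) = ∑_{k=1}^m Q(l_{k,1}(x), l_{k,2}(x), l_{k,3}(x), a_k). Then the minimum of Q(φ) over all (x, a) ∈ {0,1}^n × {0,1}^m equals 0 if and only if φ is satisfiable. -/

import Mathlib

/-- The clause-encoding function
`Q(x1,x2,x3,xc) = xc·(2 − (x1+x2+x3)) + (x1·x2 + x2·x3 + x3·x1) − (x1+x2+x3) + 1`. -/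
def clauseQ (x1 x2 x3 xc : ℤ) : ℤ :=
  xc * (2 - (x1 + x2 + x3)) + (x1 * x2 + x2 * x3 + x3 * x1) - (x1 + x2 + x3) + 1

/-- A vector is Boolean when every coordinate is 0 or 1. -/
def BoolVec {n : ℕ} (x : Fin n → ℤ) : Prop := ∀ i, x i = 0 ∨ x i = 1

/-- A literal over `n` variables: a variable index together with a polarity
(`true` = positive literal, `false` = negated literal). -/
abbrev Literal (n : ℕ) := Fin n × Bool

/-- The value of a literal under an assignment: the coordinate `x j` for a positive
literal, and the Boolean negation `1 - x j` for a negated literal. -/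
def litVal {n : ℕ} (l : Literal n) (x : Fin n → ℤ) : ℤ :=
  if l.2 then x l.1 else 1 - x l.1

/-- A 3-SAT clause: a triple of literals. -/
abbrev Clause3 (n : ℕ) := Literal n × Literal n × Literal n

/-- A clause is satisfied exactly when at least one of its literal values equals 1. -/
def clauseSat {n : ℕ} (c : Clause3 n) (x : Fin n → ℤ) : Prop :=
  litVal c.1 x = 1 ∨ litVal c.2.1 x = 1 ∨ litVal c.2.2 x = 1

instance {n : ℕ} (c : Clause3 n) (x : Fin n → ℤ) : Decidable (clauseSat c x) := by
  unfold clauseSat; infer_instance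

/-- An assignment satisfies a 3-CNF formula when it satisfies every clause. -/
def SatCNF {n m : ℕ} (φ : Fin m → Clause3 n) (x : Fin n → ℤ) : Prop :=
  ∀ k, clauseSat (φ k) x

/-- The total encoding `Q(φ)(x, a) = ∑ₖ Q(l_{k,1}(x), l_{k,2}(x), l_{k,3}(x), aₖ)`. -/
def Qtot {n m : ℕ} (φ : Fin m → Clause3 n) (x : Fin n → ℤ) (a : Fin m → ℤ) : ℤ :=
  ∑ k, clauseQ (litVal (φ k).1 x) (litVal (φ k).2.1 x) (litVal (φ k).2.2 x) (a k)

/-! With `s` the number of true literals, Boolean inputs give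
`Q = c·(2 - s) + (s - 1)(s - 2)/2`, i.e. `2c + 1`, `c`, `0`, `1 - c` for `s = 0, 1, 2, 3`.
So every clause term is nonnegative, an unsatisfied clause forces a positive term, and a
satisfied clause has a choice of `c` making its term vanish. -/

theorem litVal_eq_zero_or_one {n : ℕ} (l : Literal n) {x : Fin n → ℤ} (hx : BoolVec x) :
    litVal l x = 0 ∨ litVal l x = 1 := by
  unfold litVal
  rcases hx l.1 with h | h <;> split <;> simp [h]

section clauseQ

variable {b1 b2 b3 c : ℤ}

theorem clauseQ_nonneg (h1 : b1 = 0 ∨ b1 = 1) (h2 : b2 = 0 ∨ b2 = 1) (h3 : b3 = 0 ∨ b3 = 1)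
    (hc : c = 0 ∨ c = 1) : 0 ≤ clauseQ b1 b2 b3 c := by
  rcases h1 with rfl | rfl <;> rcases h2 with rfl | rfl <;> rcases h3 with rfl | rfl <;>
    rcases hc with rfl | rfl <;> decide

theorem clauseQ_pos_of_all_zero (hc : c = 0 ∨ c = 1) : 0 < clauseQ 0 0 0 c := by
  rcases hc with rfl | rfl <;> decide

theorem eq_one_of_clauseQ_eq_zero (h1 : b1 = 0 ∨ b1 = 1) (h2 : b2 = 0 ∨ b2 = 1)
    (h3 : b3 = 0 ∨ b3 = 1) (hc : c = 0 ∨ c = 1) (h : clauseQ b1 b2 b3 c = 0) :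
    b1 = 1 ∨ b2 = 1 ∨ b3 = 1 := by
  by_contra! hne
  obtain ⟨rfl, rfl, rfl⟩ : b1 = 0 ∧ b2 = 0 ∧ b3 = 0 :=
    ⟨h1.resolve_right hne.1, h2.resolve_right hne.2.1, h3.resolve_right hne.2.2⟩
  exact (clauseQ_pos_of_all_zero hc).ne' h

theorem exists_clauseQ_eq_zero (h1 : b1 = 0 ∨ b1 = 1) (h2 : b2 = 0 ∨ b2 = 1)
    (h3 : b3 = 0 ∨ b3 = 1) (hsat : b1 = 1 ∨ b2 = 1 ∨ b3 = 1) :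
    ∃ c, (c = 0 ∨ c = 1) ∧ clauseQ b1 b2 b3 c = 0 := by
  refine ⟨b1 * b2 * b3, ?_⟩
  rcases h1 with rfl | rfl <;> rcases h2 with rfl | rfl <;> rcases h3 with rfl | rfl <;>
    revert hsat <;> decide

end clauseQ

section Qtot

variable {n m : ℕ} (φ : Fin m → Clause3 n) {x : Fin n → ℤ} {a : Fin m → ℤ}

theorem Qtot_nonneg (hx : BoolVec x) (ha : BoolVec a) : 0 ≤ Qtot φ x a :=
  Finset.sum_nonneg fun k _ => clauseQ_nonneg (litVal_eq_zero_or_one _ hx)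
    (litVal_eq_zero_or_one _ hx) (litVal_eq_zero_or_one _ hx) (ha k)

theorem satCNF_of_Qtot_eq_zero (hx : BoolVec x) (ha : BoolVec a) (h : Qtot φ x a = 0) :
    SatCNF φ x := by
  intro k
  have hl := fun l : Literal n => litVal_eq_zero_or_one l hx
  have hk := (Finset.sum_eq_zero_iff_of_nonneg fun j _ =>
    clauseQ_nonneg (hl _) (hl _) (hl _) (ha j)).mp h k (Finset.mem_univ k)
  exact eq_one_of_clauseQ_eq_zero (hl _) (hl _) (hl _) (ha k) hk

theorem exists_Qtot_eq_zero_of_satCNF (hx : BoolVec x) (hsat : SatCNF φ x) :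
    ∃ a, BoolVec a ∧ Qtot φ x a = 0 := by
  choose a ha hQ using fun k => exists_clauseQ_eq_zero (litVal_eq_zero_or_one _ hx)
    (litVal_eq_zero_or_one _ hx) (litVal_eq_zero_or_one _ hx) (hsat k)
  exact ⟨a, ha, Finset.sum_eq_zero fun k _ => hQ k⟩

end Qtot

/-- The minimum of `Q(φ)` over all Boolean pairs `(x, a) ∈ {0,1}^n × {0,1}^m` equals `0`
if and only if `φ` is satisfiable. -/
theorem Qtot_min_zero_iff_satisfiable {n m : ℕ} (φ : Fin m → Clause3 n) :
    IsLeast {v : ℤ | ∃ (x : Fin n → ℤ) (a : Fin m → ℤ),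
        BoolVec x ∧ BoolVec a ∧ Qtot φ x a = v} 0 ↔
      ∃ x : Fin n → ℤ, BoolVec x ∧ SatCNF φ x := by
  constructor
  · rintro ⟨⟨x, a, hx, ha, hQ⟩, -⟩
    exact ⟨x, hx, satCNF_of_Qtot_eq_zero φ hx ha hQ⟩
  · rintro ⟨x, hx, hsat⟩
    obtain ⟨a, ha, hQ⟩ := exists_Qtot_eq_zero_of_satCNF φ hx hsat
    refine ⟨⟨x, a, hx, ha, hQ⟩, ?_⟩
    rintro v ⟨y, b, hy, hb, rfl⟩
    exact Qtot_nonneg φ hy hb
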